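/- Let E be the set of scaled extremals in a max cone K in ℝ≥0^n, and let S ⊆ K consist of scaled elements. Then the following are equivalent: (1) S is a minimal set of generators for K (S generates K and no proper subset of S generates K); (2) S = E and S generates K; (3) S is a basis for K. -/

import Mathlib

open scoped NNReal

/-- The max-algebraic span of `S`: all vectors `⨆_{x ∈ S} λ_x • x` where only
finitely many coefficients `λ_x` are nonzero (`MaxSpan ∅ = {0}`). -/
def MaxSpan {n : ℕ} (S : Set (Fin n → ℝ≥0)) : Set (Fin n → ℝ≥0) :=
  {u | ∃ (F : Finset (Fin n → ℝ≥0)) (lam : (Fin n → ℝ≥0) → ℝ≥0),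
    ↑F ⊆ S ∧ u = F.sup (fun x => lam x • x)}

/-- A max cone: a subset of `ℝ≥0ⁿ` closed under pointwise max `⊔` and under
multiplication by nonnegative scalars. -/
def MaxCone {n : ℕ} (K : Set (Fin n → ℝ≥0)) : Prop :=
  0 ∈ K ∧ (∀ x ∈ K, ∀ y ∈ K, x ⊔ y ∈ K) ∧ (∀ (c : ℝ≥0), ∀ x ∈ K, c • x ∈ K)

/-- `u` is an extremal in `K` if `u = v ⊔ w` with `v, w ∈ K` implies `u = v` or `u = w`. -/
def IsExtremal {n : ℕ} (K : Set (Fin n → ℝ≥0)) (u : Fin n → ℝ≥0) : Prop :=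
  u ∈ K ∧ ∀ v ∈ K, ∀ w ∈ K, u = v ⊔ w → u = v ∨ u = w

/-- A vector is scaled if its max norm `⨆ i, x i` equals `1`. -/
def Scaled {n : ℕ} (x : Fin n → ℝ≥0) : Prop := (⨆ i, x i) = 1

/-- The support of a vector. -/
def supp {n : ℕ} (v : Fin n → ℝ≥0) : Set (Fin n) := {j | 0 < v j}

/-- For `j ∈ supp u`, `rescale u j = (1 / u j) • u`, the `j`-scaling `u(j)`. -/
noncomputable def rescale {n : ℕ} (u : Fin n → ℝ≥0) (j : Fin n) : Fin n → ℝ≥0 :=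
  (u j)⁻¹ • u

/-- `T(j) = {u(j) : u ∈ T, j ∈ supp u}`. -/
noncomputable def setScale {n : ℕ} (T : Set (Fin n → ℝ≥0)) (j : Fin n) :
    Set (Fin n → ℝ≥0) :=
  {y | ∃ u ∈ T, j ∈ supp u ∧ y = rescale u j}

/-- `u` is minimal in `T` if `v ∈ T` and `v ≤ u` imply `v = u`. -/
def MinimalIn {n : ℕ} (T : Set (Fin n → ℝ≥0)) (u : Fin n → ℝ≥0) : Prop :=
  u ∈ T ∧ ∀ v ∈ T, v ≤ u → v = u

/-- A set is totally dependent if each of its elements is a max combination of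
the remaining ones. -/
def TotallyDependent {n : ℕ} (S : Set (Fin n → ℝ≥0)) : Prop :=
  ∀ x ∈ S, x ∈ MaxSpan (S \ {x})

/-- A set is independent if none of its elements is a max combination of
the remaining ones. -/
def IndependentSet {n : ℕ} (S : Set (Fin n → ℝ≥0)) : Prop :=
  ∀ x ∈ S, x ∉ MaxSpan (S \ {x})

/-- A basis for `K` is an independent set of generators for `K`. -/
def IsBasis {n : ℕ} (S K : Set (Fin n → ℝ≥0)) : Prop :=
  IndependentSet S ∧ MaxSpan S = K

/-! A scaled extremal of `MaxSpan S` written as a finite max combination of `S` equals one of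
its terms, hence is a scaled multiple of, and so equal to, an element of `S`. Conversely, in an
independent set each `x` is extremal in the span: write `x = v ⊔ w` with `v = c • x ⊔ r` and
`w = d • x ⊔ s`, where `r`, `s` avoid `x`; if `c, d < 1` then coordinatewise `x = r ⊔ s`, which
contradicts independence. Finally `x ∈ MaxSpan (S \ {x})` exactly when removing `x` does not
shrink the span, so independence is the same as minimality among generating sets. -/

section MaxAlgebra

variable {n : ℕ}

lemma NNReal.sup_smul (a b : ℝ≥0) (x : Fin n → ℝ≥0) : (a ⊔ b) • x = a • x ⊔ b • x := by
  ext j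
  exact max_mul_of_nonneg _ _ (zero_le (a := x j))

lemma NNReal.smul_finset_sup (c : ℝ≥0) (F : Finset (Fin n → ℝ≥0))
    (f : (Fin n → ℝ≥0) → Fin n → ℝ≥0) : c • F.sup f = F.sup fun y => c • f y :=
  Finset.apply_sup_eq_sup_comp (c • ·)
    (fun _ _ => funext fun _ => mul_max_of_nonneg _ _ (zero_le (a := c))) (smul_zero c)

lemma Finset.sup_ite_zero_smul [DecidableEq (Fin n → ℝ≥0)] {F H : Finset (Fin n → ℝ≥0)}
    (hFH : F ⊆ H) (lam : (Fin n → ℝ≥0) → ℝ≥0) :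
    H.sup (fun y => (if y ∈ F then lam y else 0) • y) = F.sup fun y => lam y • y := by
  simp only [ite_smul, zero_smul]
  rw [Finset.sup_ite, Finset.filter_mem_eq_inter, Finset.inter_eq_right.2 hFH]
  simp

lemma Scaled.ne_zero {u : Fin n → ℝ≥0} (hu : Scaled u) : u ≠ 0 := by
  rintro rfl
  have : (⨆ _ : Fin n, (0 : ℝ≥0)) ≤ 0 := ciSup_le' fun _ => le_rfl
  exact one_ne_zero (le_antisymm (hu ▸ this) zero_le)

lemma Scaled.eq_of_eq_smul {u x : Fin n → ℝ≥0} (hu : Scaled u) (hx : Scaled x) {c : ℝ≥0}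
    (h : u = c • x) : u = x := by
  have hc : (⨆ i, u i) = c * ⨆ i, x i := by
    rw [h, NNReal.mul_iSup]
    rfl
  rw [hu, hx, mul_one] at hc
  rw [h, ← hc, one_smul]

end MaxAlgebra

section MaxSpan

variable {n : ℕ} {K S T : Set (Fin n → ℝ≥0)}

lemma subset_maxSpan : S ⊆ MaxSpan S :=
  fun x hx => ⟨{x}, fun _ => 1, by simpa, by simp⟩

lemma maxSpan_mono (h : S ⊆ T) : MaxSpan S ⊆ MaxSpan T := by
  rintro u ⟨F, lam, hF, rfl⟩
  exact ⟨F, lam, hF.trans h, rfl⟩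

lemma MaxCone.finset_sup_smul_mem (hK : MaxCone K) {F : Finset (Fin n → ℝ≥0)} (hF : ↑F ⊆ K)
    (lam : (Fin n → ℝ≥0) → ℝ≥0) : F.sup (fun x => lam x • x) ∈ K := by
  classical
  induction F using Finset.induction with
  | empty => exact hK.1
  | insert a F _ ih =>
    rw [Finset.coe_insert, Set.insert_subset_iff] at hF
    rw [Finset.sup_insert]
    exact hK.2.1 _ (hK.2.2 _ _ hF.1) _ (ih hF.2)

lemma MaxCone.maxSpan_subset (hK : MaxCone K) (hSK : S ⊆ K) : MaxSpan S ⊆ K := by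
  rintro u ⟨F, lam, hF, rfl⟩
  exact hK.finset_sup_smul_mem (hF.trans hSK) lam

lemma maxCone_maxSpan (S : Set (Fin n → ℝ≥0)) : MaxCone (MaxSpan S) := by
  classical
  refine ⟨⟨∅, fun _ => 0, by simp, rfl⟩, ?_, ?_⟩
  · rintro _ ⟨F, lam, hF, rfl⟩ _ ⟨G, mu, hG, rfl⟩
    refine ⟨F ∪ G, fun y => (if y ∈ F then lam y else 0) ⊔ (if y ∈ G then mu y else 0),
      by simpa using Set.union_subset hF hG, ?_⟩
    simp only [NNReal.sup_smul]
    rw [← Finset.sup_ite_zero_smul Finset.subset_union_left lam,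
      ← Finset.sup_ite_zero_smul Finset.subset_union_right mu]
    exact Finset.sup_sup.symm
  · rintro c _ ⟨F, lam, hF, rfl⟩
    exact ⟨F, fun y => c * lam y, hF, by simp only [NNReal.smul_finset_sup, mul_smul]⟩

lemma maxSpan_subset_maxSpan (h : S ⊆ MaxSpan T) : MaxSpan S ⊆ MaxSpan T :=
  (maxCone_maxSpan T).maxSpan_subset h

lemma exists_eq_smul_sup_of_mem_maxSpan (x : Fin n → ℝ≥0) {v : Fin n → ℝ≥0}
    (hv : v ∈ MaxSpan S) : ∃ c : ℝ≥0, ∃ r ∈ MaxSpan (S \ {x}), v = c • x ⊔ r := by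
  classical
  obtain ⟨F, lam, hF, rfl⟩ := hv
  have hr : ↑(F.erase x) ⊆ S \ {x} := by
    simpa [Set.subset_def] using fun y hy hyx => ⟨hF hy, hyx⟩
  by_cases hx : x ∈ F
  · refine ⟨lam x, _, ⟨F.erase x, lam, hr, rfl⟩, ?_⟩
    rw [← Finset.sup_insert (f := fun y => lam y • y), Finset.insert_erase hx]
  · refine ⟨0, _, ⟨F.erase x, lam, hr, rfl⟩, ?_⟩
    rw [zero_smul, Finset.erase_eq_of_notMem hx]
    exact (bot_sup_eq _).symm

end MaxSpan

section Extremal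

variable {n : ℕ} {K L S : Set (Fin n → ℝ≥0)} {u x : Fin n → ℝ≥0}

lemma IsExtremal.mono (hu : IsExtremal L u) (huK : u ∈ K) (hKL : K ⊆ L) : IsExtremal K u :=
  ⟨huK, fun v hv w hw => hu.2 v (hKL hv) w (hKL hw)⟩

lemma IsExtremal.exists_eq_smul_of_eq_finset_sup (hK : MaxCone K) (hu : IsExtremal K u)
    (hu0 : u ≠ 0) {F : Finset (Fin n → ℝ≥0)} (hF : ↑F ⊆ K) {lam : (Fin n → ℝ≥0) → ℝ≥0}
    (h : u = F.sup fun x => lam x • x) : ∃ x ∈ F, u = lam x • x := by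
  classical
  induction F using Finset.induction with
  | empty => exact absurd h hu0
  | insert a F _ ih =>
    rw [Finset.coe_insert, Set.insert_subset_iff] at hF
    rw [Finset.sup_insert] at h
    rcases hu.2 _ (hK.2.2 _ _ hF.1) _ (hK.finset_sup_smul_mem hF.2 lam) h with h | h
    · exact ⟨a, Finset.mem_insert_self a F, h⟩
    · obtain ⟨x, hx, hux⟩ := ih hF.2 h
      exact ⟨x, Finset.mem_insert_of_mem hx, hux⟩

lemma mem_of_isExtremal_maxSpan (hS : ∀ x ∈ S, Scaled x) (hu : IsExtremal (MaxSpan S) u)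
    (hus : Scaled u) : u ∈ S := by
  obtain ⟨F, lam, hF, h⟩ := hu.1
  obtain ⟨x, hxF, hux⟩ := hu.exists_eq_smul_of_eq_finset_sup (maxCone_maxSpan S) hus.ne_zero
    (hF.trans subset_maxSpan) h
  rw [hus.eq_of_eq_smul (hS x (hF hxF)) hux]
  exact hF hxF

lemma eq_of_eq_smul_sup_of_lt_one {a : ℝ≥0} (ha : a < 1) {y : Fin n → ℝ≥0}
    (h : x = a • x ⊔ y) : x = y := by
  funext j
  have hj : x j = max (a * x j) (y j) := congrFun h j
  have hyx : y j ≤ x j := le_of_le_of_eq (le_max_right _ _) hj.symm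
  rcases max_choice (a * x j) (y j) with hm | hm
  · have hx0 : x j = 0 := by
      by_contra hne
      exact (mul_lt_of_lt_one_left (pos_iff_ne_zero.2 hne) ha).ne' (hj.trans hm)
    exact le_antisymm (hx0 ▸ zero_le) hyx
  · exact hj.trans hm

lemma IndependentSet.isExtremal_maxSpan (hS : IndependentSet S) (hx : x ∈ S) :
    IsExtremal (MaxSpan S) x := by
  refine ⟨subset_maxSpan hx, fun v hv w hw hvw => ?_⟩
  obtain ⟨c, r, hr, rfl⟩ := exists_eq_smul_sup_of_mem_maxSpan x hv
  obtain ⟨d, s, hs, rfl⟩ := exists_eq_smul_sup_of_mem_maxSpan x hw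
  have eq_of_one_le : ∀ {e : ℝ≥0} {t : Fin n → ℝ≥0}, e • x ⊔ t ≤ x → 1 ≤ e → x = e • x ⊔ t :=
    fun hle he => le_antisymm ((le_smul_of_one_le_left zero_le he).trans le_sup_left) hle
  by_cases hc : 1 ≤ c
  · exact .inl (eq_of_one_le (le_sup_left.trans_eq hvw.symm) hc)
  by_cases hd : 1 ≤ d
  · exact .inr (eq_of_one_le (le_sup_right.trans_eq hvw.symm) hd)
  have hxrs : x = r ⊔ s :=
    eq_of_eq_smul_sup_of_lt_one (not_le.1 hd) <| eq_of_eq_smul_sup_of_lt_one (not_le.1 hc) <|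
      hvw.trans (by ac_rfl)
  exact absurd (hxrs ▸ (maxCone_maxSpan _).2.1 r hr s hs) (hS x hx)

end Extremal

section Independence

variable {n : ℕ} {S : Set (Fin n → ℝ≥0)}

theorem independentSet_iff_forall_ssubset_maxSpan_ne :
    IndependentSet S ↔ ∀ T ⊂ S, MaxSpan T ≠ MaxSpan S := by
  constructor
  · intro hS T hTS hT
    obtain ⟨x, hxS, hxT⟩ := Set.exists_of_ssubset hTS
    have hT_sub : T ⊆ S \ {x} := fun y hy => ⟨hTS.1 hy, fun h => hxT (h ▸ hy)⟩
    exact hS x hxS (maxSpan_mono hT_sub (hT ▸ subset_maxSpan hxS))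
  · intro hmin x hxS hx
    refine hmin _ (Set.sdiff_singleton_ssubset.2 hxS)
      (subset_antisymm (maxSpan_mono Set.sdiff_subset) (maxSpan_subset_maxSpan ?_))
    exact (Set.subset_insert_sdiff_singleton x S).trans (Set.insert_subset hx subset_maxSpan)

theorem independentSet_iff_eq_setOf_isExtremal (hS : ∀ x ∈ S, Scaled x) :
    IndependentSet S ↔ S = {x | IsExtremal (MaxSpan S) x ∧ Scaled x} := by
  refine ⟨fun hind => ?_, fun hSE x hxS hx => ?_⟩
  · ext x
    exact ⟨fun hx => ⟨hind.isExtremal_maxSpan hx, hS x hx⟩,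
      fun ⟨hx, hxs⟩ => mem_of_isExtremal_maxSpan hS hx hxs⟩
  · obtain ⟨hxE, hxs⟩ := (Set.ext_iff.1 hSE x).1 hxS
    exact (mem_of_isExtremal_maxSpan (fun y hy => hS y hy.1)
      (hxE.mono hx (maxSpan_mono Set.sdiff_subset)) hxs).2 rfl

end Independence

theorem stmt8_general {n : ℕ} (K S : Set (Fin n → ℝ≥0)) (hSsc : ∀ x ∈ S, Scaled x) :
    ((MaxSpan S = K ∧ ∀ T ⊂ S, MaxSpan T ≠ K) ↔
      (S = {x | IsExtremal K x ∧ Scaled x} ∧ MaxSpan S = K)) ∧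
    ((S = {x | IsExtremal K x ∧ Scaled x} ∧ MaxSpan S = K) ↔ IsBasis S K) := by
  have h13 : (MaxSpan S = K ∧ ∀ T ⊂ S, MaxSpan T ≠ K) ↔ IsBasis S K := by
    rw [IsBasis, independentSet_iff_forall_ssubset_maxSpan_ne, and_comm]
    exact and_congr_left fun hK => by rw [hK]
  have h23 : (S = {x | IsExtremal K x ∧ Scaled x} ∧ MaxSpan S = K) ↔ IsBasis S K := by
    rw [IsBasis, independentSet_iff_eq_setOf_isExtremal hSsc]
    exact and_congr_left fun hK => by rw [hK]
  exact ⟨h13.trans h23.symm, h23⟩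

/-- for a set `S` of scaled elements of a max cone `K`, with `E`
the set of scaled extremals of `K`, the following are equivalent:
(1) `S` is a minimal generating set for `K`; (2) `S = E` and `S` generates `K`;
(3) `S` is a basis for `K`. -/
theorem stmt8 {n : ℕ} (K S : Set (Fin n → ℝ≥0)) (hK : MaxCone K)
    (hSK : S ⊆ K) (hSsc : ∀ x ∈ S, Scaled x) :
    ((MaxSpan S = K ∧ ∀ T ⊂ S, MaxSpan T ≠ K) ↔
      (S = {x | IsExtremal K x ∧ Scaled x} ∧ MaxSpan S = K)) ∧
    ((S = {x | IsExtremal K x ∧ Scaled x} ∧ MaxSpan S = K) ↔ IsBasis S K) :=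
  stmt8_general K S hSsc
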